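/- (1) For every C₄ > 0 there exists C₄' > 0, depending only on C₄ (and on L, s̄), such that |∂_k² f_1(x)| ≤ C₄'/‖x‖⁴ for k = 1,2 and all x with 0 < ‖x‖ ≤ C₄. (2) For every fixed β ∈ (0,1) there exists C₅(β) > 0 such that |∂_k² f_m(x)| ≤ C₅(β)/‖x‖⁴ for all m ≥ 1, k = 1,2, and all x with 0 < ‖x‖ ≤ √(12(1−β))/s̄. -/

import Mathlib

/-!
Since `f_m = 1 / p_m`, its second partial derivative is `(2 (∂p_m)² - p_m ∂²p_m) / p_m³`, so it
suffices to show, at scale `r = ‖x‖ ≤ R`, that `p_m ≥ c r²`, `|∂p_m| ≤ d r` and `|∂²p_m| ≤ d`.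
Each `p_m` is an average of `P_m(s_ℓ · x)`, where `P_m` is the Taylor polynomial of `1 - cos` of
degree `2m`. The `k`-th derivative of `P_m` is dominated by `|t|^(2-k) e^|t|` uniformly in `m`,
which gives the two upper bounds with `d = s̄² e^(s̄ R)`. For the lower bound, `P_m(t)` is an
alternating sum whose terms decrease as soon as `t² ≤ 12`, hence `P_m(t) ≥ t²/2 - t⁴/24`, which is
at least `β t²/2` when `t² ≤ 12(1 - β)`; the directions `s_1 = e_1`, `s_2 = e_2` then give
`p_m ≥ β r² / (2L)` (and `P_1(t) = t²/2` gives `p_1 ≥ r² / (2L)` with no restriction on `r`).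
Swapping the two coordinates of every `s_ℓ` turns `∂_2` into `∂_1`.
-/

open Real

noncomputable section

/-- `p_m(x) = (1/L) ∑_{ℓ=1}^L ∑_{j=1}^m (−1)^{j+1} (s_ℓ · x)^{2j}/(2j)!`. -/
def pm (L : ℕ) (s : Fin L → ℤ × ℤ) (m : ℕ) (x y : ℝ) : ℝ :=
  (1 / L) * ∑ ℓ, ∑ j ∈ Finset.Icc 1 m,
    (-1 : ℝ) ^ (j + 1) * ((s ℓ).1 * x + (s ℓ).2 * y) ^ (2 * j) / (Nat.factorial (2 * j))

/-- `f_m = 1/p_m`. -/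
def fm (L : ℕ) (s : Fin L → ℤ × ℤ) (m : ℕ) (x y : ℝ) : ℝ := 1 / pm L s m x y

open Finset Nat

theorem sum_Icc_one_eq_sum_range {M : Type*} [AddCommMonoid M] (m : ℕ) (f : ℕ → M) :
    ∑ j ∈ Icc 1 m, f j = ∑ i ∈ range m, f (i + 1) := by
  rw [← Ico_add_one_right_eq_Icc, sum_Ico_eq_sum_range]
  simp [add_comm]

theorem Antitone.alternating_sum_mem_Icc {a : ℕ → ℝ} (ha : Antitone a) (h0 : ∀ i, 0 ≤ a i)
    (n : ℕ) :
    ∑ i ∈ range n, (-1) ^ i * a i ∈ Set.Icc 0 (a 0) := by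
  induction n generalizing a with
  | zero => simpa using h0 0
  | succ n ih =>
    obtain ⟨hlo, hhi⟩ := ih (a := fun i => a (i + 1)) (fun i j hij => ha (by omega)) fun i => h0 _
    have h10 : a 1 ≤ a 0 := ha zero_le_one
    rw [sum_range_succ']
    simp only [pow_succ, mul_neg_one, neg_mul, sum_neg_distrib, pow_zero, one_mul, zero_add]
      at hlo hhi ⊢
    constructor <;> linarith

theorem hasDerivAt_pow_succ_div_factorial (n : ℕ) (t : ℝ) :
    HasDerivAt (fun t : ℝ => t ^ (n + 1) / (n + 1)!) (t ^ n / n !) t := by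
  refine ((hasDerivAt_pow (n + 1) t).div_const ((n + 1)! : ℝ)).congr_deriv ?_
  rw [factorial_succ]
  push_cast
  field_simp

theorem sum_pow_two_mul_div_factorial_le_exp {x : ℝ} (hx : 0 ≤ x) (m : ℕ) :
    ∑ i ∈ range m, x ^ (2 * i) / (2 * i)! ≤ exp x := by
  calc ∑ i ∈ range m, x ^ (2 * i) / (2 * i)!
      = ∑ n ∈ (range m).image (2 * ·), x ^ n / n ! :=
        (sum_image (f := fun n => x ^ n / (n ! : ℝ)) fun i _ j _ hij => by simpa using hij).symm
    _ ≤ ∑ n ∈ range (2 * m), x ^ n / n ! :=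
        sum_le_sum_of_subset_of_nonneg (fun n hn => by simp at hn ⊢; omega)
          fun _ _ _ => by positivity
    _ ≤ exp x := sum_le_exp_of_nonneg hx _

/-- The `k`-th derivative of the Taylor polynomial `∑_{j=1}^m (-1)^{j+1} t^{2j}/(2j)!` of
`1 - cos t`, for `k ≤ 2` (then the truncated subtraction `2 * j - k` is exact since `j ≥ 1`). -/
def oneSubCosPolyDeriv (k m : ℕ) (t : ℝ) : ℝ :=
  ∑ j ∈ Icc 1 m, (-1 : ℝ) ^ (j + 1) * t ^ (2 * j - k) / (2 * j - k)!

theorem hasDerivAt_oneSubCosPolyDeriv {k : ℕ} (hk : k ≤ 1) (m : ℕ) (t : ℝ) :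
    HasDerivAt (oneSubCosPolyDeriv k m) (oneSubCosPolyDeriv (k + 1) m t) t := by
  unfold oneSubCosPolyDeriv
  refine HasDerivAt.fun_sum fun j hj => ?_
  obtain ⟨n, hn, hn'⟩ : ∃ n, 2 * j - k = n + 1 ∧ 2 * j - (k + 1) = n :=
    ⟨2 * j - k - 1, by simp at hj; omega, by omega⟩
  simp only [mul_div_assoc, hn, hn']
  exact (hasDerivAt_pow_succ_div_factorial n t).const_mul _

theorem abs_oneSubCosPolyDeriv_le {k : ℕ} (hk : k ≤ 2) (m : ℕ) (t : ℝ) :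
    |oneSubCosPolyDeriv k m t| ≤ |t| ^ (2 - k) * exp |t| := by
  have hterm : ∀ j ∈ Icc 1 m, |(-1 : ℝ) ^ (j + 1) * t ^ (2 * j - k) / (2 * j - k)!|
      ≤ |t| ^ (2 - k) * (|t| ^ (2 * (j - 1)) / (2 * (j - 1))!) := by
    intro j hj
    have hj : 1 ≤ j := (mem_Icc.1 hj).1
    rw [abs_div, abs_mul, abs_pow, abs_neg, abs_one, one_pow, one_mul, abs_pow, Nat.abs_cast,
      ← mul_div_assoc, ← pow_add, show 2 - k + 2 * (j - 1) = 2 * j - k by omega]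
    gcongr
    omega
  calc |oneSubCosPolyDeriv k m t|
      ≤ ∑ j ∈ Icc 1 m, |t| ^ (2 - k) * (|t| ^ (2 * (j - 1)) / (2 * (j - 1))!) :=
        (abs_sum_le_sum_abs _ _).trans (sum_le_sum hterm)
    _ = |t| ^ (2 - k) * ∑ i ∈ range m, |t| ^ (2 * i) / (2 * i)! := by
        rw [← mul_sum, sum_Icc_one_eq_sum_range]
        simp
    _ ≤ |t| ^ (2 - k) * exp |t| := by
        gcongr
        exact sum_pow_two_mul_div_factorial_le_exp (abs_nonneg t) m

theorem oneSubCosPolyDeriv_zero_one (t : ℝ) : oneSubCosPolyDeriv 0 1 t = t ^ 2 / 2 := by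
  simp [oneSubCosPolyDeriv]

theorem sq_div_two_sub_le_oneSubCosPolyDeriv_zero {m : ℕ} (hm : 1 ≤ m) {t : ℝ}
    (ht : t ^ 2 ≤ 12) :
    t ^ 2 / 2 - t ^ 4 / 24 ≤ oneSubCosPolyDeriv 0 m t := by
  set a : ℕ → ℝ := fun i => (t ^ 2) ^ (i + 1) / (2 * i + 2)!
  have ha : Antitone a := by
    refine antitone_nat_of_succ_le fun i => ?_
    have hf : ((2 * (i + 1) + 2)! : ℝ) = (2 * i + 4) * (2 * i + 3) * (2 * i + 2)! := by
      rw [show 2 * (i + 1) + 2 = 2 * i + 2 + 1 + 1 by ring, factorial_succ, factorial_succ]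
      push_cast
      ring
    have hi : t ^ 2 ≤ (2 * i + 4) * (2 * i + 3) := by nlinarith
    have hp : 0 ≤ (t ^ 2) ^ (i + 1) * (2 * i + 2)! := by positivity
    simp only [a]
    rw [hf, pow_succ _ (i + 1), div_le_div_iff₀ (by positivity) (by positivity)]
    nlinarith [mul_le_mul_of_nonneg_left hi hp]
  have hS : oneSubCosPolyDeriv 0 m t = ∑ i ∈ range m, (-1) ^ i * a i := by
    rw [oneSubCosPolyDeriv, sum_Icc_one_eq_sum_range]
    refine sum_congr rfl fun i _ => ?_
    rw [Nat.sub_zero, pow_mul, mul_add, mul_one]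
    ring
  obtain ⟨n, rfl⟩ : ∃ n, m = n + 1 := ⟨m - 1, by omega⟩
  have htail := (Antitone.alternating_sum_mem_Icc (a := fun i => a (i + 1))
    (fun i j hij => ha (by omega)) (fun i => by positivity) n).2
  rw [hS, sum_range_succ']
  simp only [pow_succ, mul_neg_one, neg_mul, sum_neg_distrib, pow_zero, one_mul, a] at htail ⊢
  norm_num at htail ⊢
  linarith

theorem mul_sq_le_oneSubCosPolyDeriv_zero {m : ℕ} (hm : 1 ≤ m) {β t : ℝ} (hβ : 0 ≤ β)
    (ht : t ^ 2 ≤ 12 * (1 - β)) : β / 2 * t ^ 2 ≤ oneSubCosPolyDeriv 0 m t := by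
  have h := sq_div_two_sub_le_oneSubCosPolyDeriv_zero hm (t := t) (by nlinarith)
  nlinarith [mul_le_mul_of_nonneg_left ht (sq_nonneg t)]

theorem sq_mul_add_mul_le {a b u v S : ℝ} (h : a ^ 2 + b ^ 2 ≤ S) :
    (a * u + b * v) ^ 2 ≤ S * (u ^ 2 + v ^ 2) := by
  have huv : 0 ≤ u ^ 2 + v ^ 2 := by positivity
  nlinarith [sq_nonneg (a * v - b * u), mul_le_mul_of_nonneg_right h huv]

theorem abs_one_div_mul_sum_le {L : ℕ} {f : Fin L → ℝ} {K : ℝ} (hK : 0 ≤ K)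
    (hf : ∀ ℓ, |f ℓ| ≤ K) : |1 / L * ∑ ℓ, f ℓ| ≤ K := by
  rcases L.eq_zero_or_pos with rfl | hL
  · simpa using hK
  have hsum : |∑ ℓ, f ℓ| ≤ L * K := by
    simpa using (abs_sum_le_sum_abs _ _).trans (sum_le_card_nsmul univ _ K fun ℓ _ => hf ℓ)
  rw [abs_mul, abs_of_pos (by positivity), one_div, inv_mul_le_iff₀ (by positivity)]
  exact hsum

theorem iteratedDeriv_two_one_div {P P' P'' : ℝ → ℝ} (hP : ∀ t, HasDerivAt P (P' t) t)
    (hP' : ∀ t, HasDerivAt P' (P'' t) t) {x : ℝ} (hx : P x ≠ 0) :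
    iteratedDeriv 2 (fun t => 1 / P t) x = (2 * P' x ^ 2 - P x * P'' x) / P x ^ 3 := by
  have hderiv : deriv (fun t => 1 / P t) =ᶠ[nhds x] fun t => -P' t / P t ^ 2 := by
    filter_upwards [(hP x).continuousAt.eventually_ne hx] with t ht
    rw [((hasDerivAt_const t (1 : ℝ)).fun_div (hP t) ht).deriv]
    ring
  rw [iteratedDeriv_succ, iteratedDeriv_one, hderiv.deriv_eq,
    ((hP' x).fun_neg.fun_div ((hP x).fun_pow 2) (pow_ne_zero 2 hx)).deriv]
  field_simp
  ring

theorem abs_iteratedDeriv_two_one_div_le {P P' P'' : ℝ → ℝ} (hP : ∀ t, HasDerivAt P (P' t) t)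
    (hP' : ∀ t, HasDerivAt P' (P'' t) t) {x c d r : ℝ} (hc : 0 < c) (hr : 0 < r)
    (hPx : c * r ^ 2 ≤ P x) (hP'x : |P' x| ≤ d * r) (hP''x : |P'' x| ≤ d) :
    |iteratedDeriv 2 (fun t => 1 / P t) x| ≤ (d / c ^ 2 + 2 * d ^ 2 / c ^ 3) / r ^ 4 := by
  have hcr : 0 < c * r ^ 2 := by positivity
  have hPpos : 0 < P x := hcr.trans_le hPx
  have hd : 0 ≤ d := (abs_nonneg _).trans hP''x
  have hP'sq : P' x ^ 2 ≤ (d * r) ^ 2 := by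
    rw [← sq_abs]; exact pow_le_pow_left₀ (abs_nonneg _) hP'x 2
  rw [iteratedDeriv_two_one_div hP hP' hPpos.ne', abs_div, abs_of_pos (pow_pos hPpos 3)]
  calc |2 * P' x ^ 2 - P x * P'' x| / P x ^ 3
      ≤ (2 * (d * r) ^ 2 + P x * d) / P x ^ 3 := by
        gcongr
        calc |2 * P' x ^ 2 - P x * P'' x| ≤ |2 * P' x ^ 2| + |P x * P'' x| := abs_sub _ _
          _ ≤ 2 * (d * r) ^ 2 + P x * d := by
            rw [abs_mul, abs_mul, abs_of_pos hPpos, abs_two, abs_of_nonneg (sq_nonneg _)]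
            gcongr
    _ = 2 * (d * r) ^ 2 / P x ^ 3 + d / P x ^ 2 := by field_simp
    _ ≤ 2 * (d * r) ^ 2 / (c * r ^ 2) ^ 3 + d / (c * r ^ 2) ^ 2 := by gcongr
    _ = (d / c ^ 2 + 2 * d ^ 2 / c ^ 3) / r ^ 4 := by field_simp; ring

def pmDerivFst (k L : ℕ) (s : Fin L → ℤ × ℤ) (m : ℕ) (x y : ℝ) : ℝ :=
  1 / L * ∑ ℓ, ((s ℓ).1 : ℝ) ^ k * oneSubCosPolyDeriv k m ((s ℓ).1 * x + (s ℓ).2 * y)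

theorem pmDerivFst_zero (L : ℕ) (s : Fin L → ℤ × ℤ) (m : ℕ) (x y : ℝ) :
    pmDerivFst 0 L s m x y = pm L s m x y := by
  simp [pmDerivFst, pm, oneSubCosPolyDeriv]

theorem hasDerivAt_pmDerivFst {k : ℕ} (hk : k ≤ 1) (L : ℕ) (s : Fin L → ℤ × ℤ) (m : ℕ)
    (x y : ℝ) :
    HasDerivAt (fun x => pmDerivFst k L s m x y) (pmDerivFst (k + 1) L s m x y) x := by
  refine (HasDerivAt.fun_sum fun ℓ _ => ?_).const_mul _
  have hlin : HasDerivAt (fun x : ℝ => (s ℓ).1 * x + (s ℓ).2 * y) ((s ℓ).1) x := by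
    simpa using ((hasDerivAt_id x).const_mul ((s ℓ).1 : ℝ)).add_const (((s ℓ).2 : ℝ) * y)
  exact (((hasDerivAt_oneSubCosPolyDeriv hk m _).comp x hlin).const_mul _).congr_deriv (by ring)

theorem abs_pmDerivFst_le {k : ℕ} (hk : k ≤ 2) {L : ℕ} {s : Fin L → ℤ × ℤ} (m : ℕ)
    {x y sbar T : ℝ}
    (hsbar : 0 ≤ sbar) (hT : 0 ≤ T) (hs : ∀ ℓ, |((s ℓ).1 : ℝ)| ≤ sbar)
    (ht : ∀ ℓ, |(s ℓ).1 * x + (s ℓ).2 * y| ≤ T) :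
    |pmDerivFst k L s m x y| ≤ sbar ^ k * (T ^ (2 - k) * exp T) := by
  refine abs_one_div_mul_sum_le (by positivity) fun ℓ => ?_
  rw [abs_mul, abs_pow]
  gcongr
  · exact hs ℓ
  refine (abs_oneSubCosPolyDeriv_le hk m _).trans ?_
  gcongr
  exacts [ht ℓ, ht ℓ]

theorem abs_iteratedDeriv_two_fm_le {L : ℕ} (s : Fin L → ℤ × ℤ) (m : ℕ) {sbar R c x y : ℝ}
    (hsbar : 0 ≤ sbar) (hc : 0 < c)
    (hs : ∀ ℓ, ((s ℓ).1 : ℝ) ^ 2 + ((s ℓ).2 : ℝ) ^ 2 ≤ sbar ^ 2)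
    (hr : 0 < √(x ^ 2 + y ^ 2)) (hR : √(x ^ 2 + y ^ 2) ≤ R)
    (hP : c * (x ^ 2 + y ^ 2) ≤ pm L s m x y) :
    |iteratedDeriv 2 (fun t => fm L s m t y) x|
      ≤ (sbar ^ 2 * exp (sbar * R) / c ^ 2 + 2 * (sbar ^ 2 * exp (sbar * R)) ^ 2 / c ^ 3)
        / √(x ^ 2 + y ^ 2) ^ 4 := by
  set r := √(x ^ 2 + y ^ 2)
  have hr2 : r ^ 2 = x ^ 2 + y ^ 2 := sq_sqrt (by positivity)
  have hs1 : ∀ ℓ, |((s ℓ).1 : ℝ)| ≤ sbar := fun ℓ =>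
    abs_le_of_sq_le_sq (by nlinarith [hs ℓ, sq_nonneg ((s ℓ).2 : ℝ)]) hsbar
  have ht : ∀ ℓ, |(s ℓ).1 * x + (s ℓ).2 * y| ≤ sbar * r := fun ℓ =>
    abs_le_of_sq_le_sq (by rw [mul_pow, hr2]; exact sq_mul_add_mul_le (hs ℓ)) (by positivity)
  have hexp : exp (sbar * r) ≤ exp (sbar * R) := by gcongr
  have hsr : 0 ≤ sbar * r := by positivity
  have hfm : (fun t => fm L s m t y) = fun t => 1 / pmDerivFst 0 L s m t y := by
    funext t
    rw [pmDerivFst_zero, fm]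
  rw [hfm]
  refine abs_iteratedDeriv_two_one_div_le (P := fun t => pmDerivFst 0 L s m t y)
    (hasDerivAt_pmDerivFst zero_le_one L s m · y) (hasDerivAt_pmDerivFst le_rfl L s m · y)
    hc hr ?_ ?_ ?_
  · rwa [pmDerivFst_zero, hr2]
  · refine (abs_pmDerivFst_le one_le_two m hsbar hsr hs1 ht).trans ?_
    rw [show sbar ^ 1 * ((sbar * r) ^ (2 - 1) * exp (sbar * r))
      = sbar ^ 2 * exp (sbar * r) * r by ring]
    gcongr
  · refine (abs_pmDerivFst_le le_rfl m hsbar hsr hs1 ht).trans ?_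
    simpa using mul_le_mul_of_nonneg_left hexp (sq_nonneg sbar)

theorem pm_swap (L : ℕ) (s : Fin L → ℤ × ℤ) (m : ℕ) (x y : ℝ) :
    pm L (fun ℓ => (s ℓ).swap) m y x = pm L s m x y := by
  simp [pm, add_comm]

theorem exists_abs_iteratedDeriv_two_fm_le {L : ℕ} (s : Fin L → ℤ × ℤ) {sbar c : ℝ} (R : ℝ)
    (hsbar : 0 < sbar) (hc : 0 < c)
    (hs : ∀ ℓ, ((s ℓ).1 : ℝ) ^ 2 + ((s ℓ).2 : ℝ) ^ 2 ≤ sbar ^ 2) :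
    ∃ K, 0 < K ∧ ∀ m x y, 0 < √(x ^ 2 + y ^ 2) → √(x ^ 2 + y ^ 2) ≤ R →
      c * (x ^ 2 + y ^ 2) ≤ pm L s m x y →
      |iteratedDeriv 2 (fun t => fm L s m t y) x| ≤ K / √(x ^ 2 + y ^ 2) ^ 4 ∧
      |iteratedDeriv 2 (fun t => fm L s m x t) y| ≤ K / √(x ^ 2 + y ^ 2) ^ 4 := by
  refine ⟨_, by positivity, fun m x y hr hR hP =>
    ⟨abs_iteratedDeriv_two_fm_le s m hsbar.le hc hs hr hR hP, ?_⟩⟩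
  have hfm : (fun t => fm L s m x t) = fun t => fm L (fun ℓ => (s ℓ).swap) m t x := by
    funext t
    rw [fm, fm, pm_swap]
  rw [add_comm (x ^ 2)] at hr hR hP ⊢
  rw [← pm_swap] at hP
  rw [hfm]
  exact abs_iteratedDeriv_two_fm_le _ m hsbar.le hc (fun ℓ => by simpa [add_comm] using hs ℓ)
    hr hR hP

theorem div_mul_le_pm {L : ℕ} {s : Fin L → ℤ × ℤ} {i j : Fin L} (hij : i ≠ j)
    (hi : s i = (1, 0)) (hj : s j = (0, 1)) {m : ℕ} {a x y : ℝ} (ha : 0 ≤ a)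
    (h : ∀ ℓ, a * ((s ℓ).1 * x + (s ℓ).2 * y) ^ 2
      ≤ oneSubCosPolyDeriv 0 m ((s ℓ).1 * x + (s ℓ).2 * y)) :
    a / L * (x ^ 2 + y ^ 2) ≤ pm L s m x y := by
  rw [← pmDerivFst_zero, pmDerivFst]
  simp only [pow_zero, one_mul]
  calc a / L * (x ^ 2 + y ^ 2)
      = 1 / L * (a * ((s i).1 * x + (s i).2 * y) ^ 2 + a * ((s j).1 * x + (s j).2 * y) ^ 2) := by
        simp only [hi, hj]
        push_cast
        ring
    _ ≤ 1 / L * ∑ ℓ, a * ((s ℓ).1 * x + (s ℓ).2 * y) ^ 2 := by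
        gcongr
        exact add_le_sum (f := fun ℓ => a * ((s ℓ).1 * x + (s ℓ).2 * y) ^ 2)
          (fun _ _ => by positivity) (mem_univ _) (mem_univ _) hij
    _ ≤ _ := by
        gcongr with ℓ
        exact h ℓ

/-- (1) for every `C₄ > 0` there is `C₄' > 0` with
`|∂_k² f_1(x)| ≤ C₄'/‖x‖⁴` for `0 < ‖x‖ ≤ C₄`; (2) for every `β ∈ (0,1)` there is
`C₅(β) > 0` with `|∂_k² f_m(x)| ≤ C₅(β)/‖x‖⁴` for all `m ≥ 1` and `0 < ‖x‖ ≤ √(12(1−β))/s̄`. -/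
theorem second_partials_fm_bound (L : ℕ) (hL : 2 ≤ L) (s : Fin L → ℤ × ℤ)
    (h1 : s ⟨0, by omega⟩ = (1, 0)) (h2 : s ⟨1, by omega⟩ = (0, 1))
    (sbar : ℝ)
    (hsbar : IsGreatest (Set.range fun ℓ =>
      Real.sqrt (((s ℓ).1 : ℝ) ^ 2 + ((s ℓ).2 : ℝ) ^ 2)) sbar) :
    (∀ C₄ : ℝ, 0 < C₄ → ∃ C₄' : ℝ, 0 < C₄' ∧
      ∀ x y : ℝ, 0 < Real.sqrt (x ^ 2 + y ^ 2) → Real.sqrt (x ^ 2 + y ^ 2) ≤ C₄ →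
        |iteratedDeriv 2 (fun t => fm L s 1 t y) x| ≤ C₄' / Real.sqrt (x ^ 2 + y ^ 2) ^ 4 ∧
        |iteratedDeriv 2 (fun t => fm L s 1 x t) y| ≤ C₄' / Real.sqrt (x ^ 2 + y ^ 2) ^ 4) ∧
    (∀ β : ℝ, β ∈ Set.Ioo (0 : ℝ) 1 → ∃ C₅ : ℝ, 0 < C₅ ∧
      ∀ m : ℕ, 1 ≤ m → ∀ x y : ℝ, 0 < Real.sqrt (x ^ 2 + y ^ 2) →
        Real.sqrt (x ^ 2 + y ^ 2) ≤ Real.sqrt (12 * (1 - β)) / sbar →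
        |iteratedDeriv 2 (fun t => fm L s m t y) x| ≤ C₅ / Real.sqrt (x ^ 2 + y ^ 2) ^ 4 ∧
        |iteratedDeriv 2 (fun t => fm L s m x t) y| ≤ C₅ / Real.sqrt (x ^ 2 + y ^ 2) ^ 4) := by
  have hnorm : ∀ ℓ, ((s ℓ).1 : ℝ) ^ 2 + ((s ℓ).2 : ℝ) ^ 2 ≤ sbar ^ 2 := fun ℓ =>
    (sqrt_le_iff.1 (hsbar.2 ⟨ℓ, rfl⟩)).2
  have hsbar_pos : 0 < sbar := by
    have h := hsbar.2 ⟨⟨0, by omega⟩, rfl⟩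
    simp only [h1] at h
    norm_num at h
    linarith
  have h01 : (⟨0, by omega⟩ : Fin L) ≠ ⟨1, by omega⟩ := by simp
  have hL0 : (0 : ℝ) < L := by positivity
  refine ⟨fun C₄ _ => ?_, fun β ⟨hβ0, hβ1⟩ => ?_⟩
  · obtain ⟨K, hK, hbound⟩ :=
      exists_abs_iteratedDeriv_two_fm_le s C₄ hsbar_pos (c := 1 / 2 / L) (by positivity) hnorm
    refine ⟨K, hK, fun x y hr hrC => hbound 1 x y hr hrC (div_mul_le_pm h01 h1 h2 (by norm_num) ?_)⟩
    intro ℓ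
    rw [oneSubCosPolyDeriv_zero_one]
    linarith
  · obtain ⟨K, hK, hbound⟩ := exists_abs_iteratedDeriv_two_fm_le s (√(12 * (1 - β)) / sbar)
      hsbar_pos (c := β / 2 / L) (by positivity) hnorm
    refine ⟨K, hK, fun m hm x y hr hrR =>
      hbound m x y hr hrR (div_mul_le_pm h01 h1 h2 (by positivity) fun ℓ => ?_)⟩
    refine mul_sq_le_oneSubCosPolyDeriv_zero hm hβ0.le ?_
    calc _ ≤ sbar ^ 2 * (x ^ 2 + y ^ 2) := sq_mul_add_mul_le (hnorm ℓ)
      _ = (sbar * √(x ^ 2 + y ^ 2)) ^ 2 := by rw [mul_pow, sq_sqrt (by positivity)]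
      _ ≤ √(12 * (1 - β)) ^ 2 := by
        gcongr
        exact (le_div_iff₀' hsbar_pos).1 hrR
      _ = 12 * (1 - β) := sq_sqrt (by linarith)

end
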